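/- Fix e > 1 and let β ∈ Q_+ = ℤ_{≥0}-span of {α_i : i ∈ ℤ/e}. Then β is a positive root (i.e., β = α(t,h) for some t ∈ ℤ/e, h ≥ 1) if and only if β = cont(ξ) for some ribbon ξ ⊆ ℤ×ℤ. -/

import Mathlib

open Finset

abbrev Node : Type := ℤ × ℤ

/-- `v` is weakly southeast of `u` (product order). -/
def SE (u v : Node) : Prop := u.1 ≤ v.1 ∧ u.2 ≤ v.2

/-- `v` is weakly northeast of `u` (`u ↗ v`). -/
def NEr (u v : Node) : Prop := v.1 ≤ u.1 ∧ u.2 ≤ v.2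

/-- `v` is strictly northeast of `u` (`u ⇗ v`). -/
def SNE (u v : Node) : Prop := v.1 < u.1 ∧ u.2 < v.2

def IsSkew (τ : Finset Node) : Prop :=
  ∀ u ∈ τ, ∀ w ∈ τ, ∀ v : Node, SE u v → SE v w → v ∈ τ

def Adj (u v : Node) : Prop :=
  v = u + (1, 0) ∨ v = u + (-1, 0) ∨ v = u + (0, 1) ∨ v = u + (0, -1)

def PathIn (τ : Finset Node) (u v : Node) : Prop :=
  Relation.ReflTransGen (fun a b => a ∈ τ ∧ b ∈ τ ∧ Adj a b) u v

def IsConnectedShape (τ : Finset Node) : Prop :=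
  ∀ u ∈ τ, ∀ v ∈ τ, PathIn τ u v

def Cornered (τ : Finset Node) : Prop :=
  (∀ u ∈ τ, ∀ u' ∈ τ, (u + (1, 0) ∉ τ ∧ u + (0, -1) ∉ τ) →
      (u' + (1, 0) ∉ τ ∧ u' + (0, -1) ∉ τ) → u = u') ∧
  (∀ v ∈ τ, ∀ v' ∈ τ, (v + (-1, 0) ∉ τ ∧ v + (0, 1) ∉ τ) →
      (v' + (-1, 0) ∉ τ ∧ v' + (0, 1) ∉ τ) → v = v')

def DiagConvex (τ : Finset Node) : Prop :=
  ∀ u ∈ τ, ∀ w ∈ τ, ∀ v : Node,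
    u.2 - u.1 = v.2 - v.1 → v.2 - v.1 = w.2 - w.1 → SE u v → SE v w → v ∈ τ

def Thin (τ : Finset Node) : Prop :=
  ∀ u ∈ τ, ∀ v ∈ τ, u.2 - u.1 = v.2 - v.1 → u = v

def IsRibbon (ξ : Finset Node) : Prop :=
  ξ.Nonempty ∧ IsSkew ξ ∧ IsConnectedShape ξ ∧ Thin ξ

def MaxSW (τ : Finset Node) (u : Node) : Prop :=
  u ∈ τ ∧ ∀ v ∈ τ, NEr v u → v = u

def MaxNE (τ : Finset Node) (v : Node) : Prop :=
  v ∈ τ ∧ ∀ w ∈ τ, NEr v w → w = v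

def IsNEPath (z : ℕ → Node) (k : ℕ) : Prop :=
  ∀ i, i + 1 < k → z (i + 1) = z i + (-1, 0) ∨ z (i + 1) = z i + (0, 1)

def IsSEPath (z : ℕ → Node) (k : ℕ) : Prop :=
  ∀ i, i + 1 < k → z (i + 1) = z i + (1, 0) ∨ z (i + 1) = z i + (0, 1)

def SERemovable (τ μ : Finset Node) : Prop :=
  μ ⊆ τ ∧ ∀ u ∈ μ, ∀ v ∈ τ \ μ, ¬ SE u v

/-- Residue of a node, in `ZMod e`. -/
def res (e : ℕ) (u : Node) : ZMod e := ((u.2 - u.1 : ℤ) : ZMod e)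

/-- Content of a finite set of nodes, as an element of the free module on `ZMod e`. -/
def cont (e : ℕ) (τ : Finset Node) : ZMod e → ℤ :=
  fun i => ((τ.filter (fun u => res e u = i)).card : ℤ)

/-- `α(t,h) = α_t + α_{t+1} + ⋯ + α_{t+h-1}` (indices mod `e`). -/
def alphaR (e : ℕ) (t : ZMod e) (h : ℕ) : ZMod e → ℤ :=
  fun i => (((Finset.range h).filter (fun j : ℕ => t + ((j : ℕ) : ZMod e) = i)).card : ℤ)

def IsPosRoot (e : ℕ) (β : ZMod e → ℤ) : Prop :=
  ∃ t : ZMod e, ∃ h : ℕ, 1 ≤ h ∧ β = alphaR e t h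

/-- The null root `δ = α_0 + ⋯ + α_{e-1}`. -/
def deltaR (e : ℕ) : ZMod e → ℤ := fun _ => 1

/-- Imaginary elements: positive multiples of `δ`. -/
def IsImag (e : ℕ) (β : ZMod e → ℤ) : Prop :=
  ∃ m : ℕ, 1 ≤ m ∧ β = fun _ => (m : ℤ)

/-- Indivisible positive roots `Ψ`: real positive roots together with `δ`. -/
def IsIndiv (e : ℕ) (β : ZMod e → ℤ) : Prop :=
  (∃ t : ZMod e, ∃ h : ℕ, 1 ≤ h ∧ ¬ (e ∣ h) ∧ β = alphaR e t h) ∨ β = deltaR e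

/-- A convex preorder on the positive roots. -/
def ConvexPreorder (e : ℕ) (R : (ZMod e → ℤ) → (ZMod e → ℤ) → Prop) : Prop :=
  (∀ β, IsPosRoot e β → R β β) ∧
  (∀ β γ ν, IsPosRoot e β → IsPosRoot e γ → IsPosRoot e ν →
      R β γ → R γ ν → R β ν) ∧
  (∀ β γ, IsPosRoot e β → IsPosRoot e γ → (R β γ ∨ R γ β)) ∧
  (∀ β γ, IsPosRoot e β → IsPosRoot e γ → R β γ → IsPosRoot e (β + γ) →
      R β (β + γ) ∧ R (β + γ) γ) ∧
  (∀ β γ, IsPosRoot e β → IsPosRoot e γ →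
      ((R β γ ∧ R γ β) ↔ (β = γ ∨ (IsImag e β ∧ IsImag e γ))))

/-- `β ≻ γ`. -/
def StrictR (e : ℕ) (R : (ZMod e → ℤ) → (ZMod e → ℤ) → Prop)
    (β γ : ZMod e → ℤ) : Prop := R β γ ∧ ¬ R γ β

/-- `θ` is a sum of positive roots strictly smaller than `β`. -/
def SumRootsLt (e : ℕ) (R : (ZMod e → ℤ) → (ZMod e → ℤ) → Prop)
    (β θ : ZMod e → ℤ) : Prop :=
  ∃ k : ℕ, ∃ γ : Fin k → (ZMod e → ℤ),
    (∀ i, IsPosRoot e (γ i) ∧ StrictR e R β (γ i)) ∧ θ = ∑ i, γ i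

/-- `θ` is a sum of positive roots strictly greater than `β`. -/
def SumRootsGt (e : ℕ) (R : (ZMod e → ℤ) → (ZMod e → ℤ) → Prop)
    (β θ : ZMod e → ℤ) : Prop :=
  ∃ k : ℕ, ∃ γ : Fin k → (ZMod e → ℤ),
    (∀ i, IsPosRoot e (γ i) ∧ StrictR e R (γ i) β) ∧ θ = ∑ i, γ i

/-- A two-tile tableau `(λ1, λ2)` for `τ`. -/
def IsTableau2 (τ lam1 lam2 : Finset Node) : Prop :=
  IsSkew lam1 ∧ IsSkew lam2 ∧ Disjoint lam1 lam2 ∧ lam1 ∪ lam2 = τ ∧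
  ∀ u ∈ lam2, ∀ v ∈ lam1, ¬ SE u v

/-- A cuspidal skew shape (with respect to the preorder `R`). -/
def IsCuspidal (e : ℕ) (R : (ZMod e → ℤ) → (ZMod e → ℤ) → Prop)
    (τ : Finset Node) : Prop :=
  IsPosRoot e (cont e τ) ∧
  ∀ lam1 lam2 : Finset Node, IsTableau2 τ lam1 lam2 →
    SumRootsLt e R (cont e τ) (cont e lam1) ∧
    SumRootsGt e R (cont e τ) (cont e lam2)

/-- An SE-removable ribbon in `τ`. -/
def SERemRibbon (τ ξ : Finset Node) : Prop := IsRibbon ξ ∧ SERemovable τ ξ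

/-- A minimal SE-removable ribbon in `τ`. -/
def MinSERem (e : ℕ) (R : (ZMod e → ℤ) → (ZMod e → ℤ) → Prop)
    (τ ξ : Finset Node) : Prop :=
  SERemRibbon τ ξ ∧ ∀ ν, SERemRibbon τ ν → R (cont e ν) (cont e ξ)

/-!
The residue of a node only depends on its diagonal index `u.2 - u.1`. A ribbon is thin, so
this index is injective on it, and connected, so the index takes every value between its
extremes (a unit step changes it by `±1`). Hence the diagonals of a ribbon with `h` nodes form
an interval `[a, a + h)`, and its content is `α(a mod e, h)`. Conversely, a single row of `h`
nodes starting in column `t` has content `α(t, h)`.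
-/

def Node.diag (u : Node) : ℤ := u.2 - u.1

lemma Thin.injOn_diag {ξ : Finset Node} (hξ : Thin ξ) : Set.InjOn Node.diag ξ := hξ

lemma adj_comm {u v : Node} : Adj u v ↔ Adj v u := by
  simp only [Adj, Prod.ext_iff, Prod.fst_add, Prod.snd_add]
  omega

lemma diag_eq_of_adj {u v : Node} (h : Adj u v) :
    Node.diag v = Node.diag u + 1 ∨ Node.diag v = Node.diag u - 1 := by
  simp only [Adj, Prod.ext_iff, Prod.fst_add, Prod.snd_add] at h
  unfold Node.diag
  omega

lemma PathIn.symm {τ : Finset Node} {u v : Node} (h : PathIn τ u v) : PathIn τ v u := by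
  induction h with
  | refl => exact .refl
  | tail _ hbc ih => exact .head ⟨hbc.2.1, hbc.1, adj_comm.mp hbc.2.2⟩ ih

-- Discrete intermediate value theorem: each step of a path changes `Node.diag` by `±1`.
lemma PathIn.mem_image_diag {τ : Finset Node} {u v : Node} (h : PathIn τ u v) (hu : u ∈ τ)
    {d : ℤ} (hd : d ∈ Set.Icc (Node.diag u) (Node.diag v)) : d ∈ τ.image Node.diag := by
  induction h using Relation.ReflTransGen.head_induction_on with
  | refl => exact mem_image.mpr ⟨_, hu, le_antisymm hd.1 hd.2⟩
  | head hab _ ih =>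
    rcases hd.1.eq_or_lt with rfl | hlt
    · exact mem_image_of_mem _ hab.1
    · exact ih hab.2.1 ⟨by rcases diag_eq_of_adj hab.2.2 with h | h <;> omega, hd.2⟩

lemma IsConnectedShape.ordConnected_image_diag {ξ : Finset Node} (hξ : IsConnectedShape ξ) :
    (↑(ξ.image Node.diag) : Set ℤ).OrdConnected := by
  refine ⟨fun x hx y hy d hd => ?_⟩
  obtain ⟨u, hu, rfl⟩ := mem_image.mp hx
  obtain ⟨v, hv, rfl⟩ := mem_image.mp hy
  exact (hξ u hu v hv).mem_image_diag hu hd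

lemma Finset.eq_Ico_of_ordConnected {D : Finset ℤ} (hne : D.Nonempty)
    (hD : (↑D : Set ℤ).OrdConnected) : D = Ico (D.min' hne) (D.min' hne + #D) := by
  have hIcc : D = Icc (D.min' hne) (D.max' hne) :=
    Subset.antisymm (fun d hd => mem_Icc.mpr ⟨min'_le D d hd, le_max' D d hd⟩)
      (fun d hd => by
        simpa using hD.out (D.min'_mem hne) (D.max'_mem hne) (mem_Icc.mp hd))
  have hcard := congrArg card hIcc
  rw [Int.card_Icc] at hcard
  refine hIcc.trans (Finset.ext fun d => ?_)
  simp only [mem_Icc, mem_Ico]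
  omega

lemma IsRibbon.image_diag_eq_Ico {ξ : Finset Node} (hξ : IsRibbon ξ) :
    ∃ a : ℤ, ξ.image Node.diag = Ico a (a + #ξ) := by
  obtain ⟨hne, -, hconn, hthin⟩ := hξ
  have h := eq_Ico_of_ordConnected (hne.image Node.diag) hconn.ordConnected_image_diag
  rw [card_image_of_injOn hthin.injOn_diag] at h
  exact ⟨_, h⟩

def residueCount (e : ℕ) (D : Finset ℤ) : ZMod e → ℤ :=
  fun i => #{d ∈ D | ((d : ℤ) : ZMod e) = i}

lemma cont_eq_residueCount_image_diag (e : ℕ) {ξ : Finset Node} (hξ : Thin ξ) :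
    cont e ξ = residueCount e (ξ.image Node.diag) := by
  funext i
  rw [residueCount, filter_image,
    card_image_of_injOn (hξ.injOn_diag.mono (coe_subset.mpr (filter_subset _ _)))]
  rfl

lemma alphaR_intCast (e : ℕ) (a : ℤ) (h : ℕ) :
    alphaR e a h = residueCount e (Ico a (a + h)) := by
  funext i
  rw [residueCount, Int.Ico_eq_finset_map, filter_map, card_map, add_sub_cancel_left,
    Int.toNat_natCast]
  simp [alphaR]

noncomputable def row (a b : ℤ) : Finset Node := {0} ×ˢ Ico a b

lemma mem_row {a b : ℤ} {u : Node} : u ∈ row a b ↔ u.1 = 0 ∧ a ≤ u.2 ∧ u.2 < b := by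
  simp only [row, mem_product, mem_singleton, mem_Ico]

lemma image_diag_row (a b : ℤ) : (row a b).image Node.diag = Ico a b := by
  ext d
  simp [row, Node.diag]

lemma pathIn_row {a b c c' : ℤ} (hc : a ≤ c) (hcc' : c ≤ c') (hc' : c' < b) :
    PathIn (row a b) (0, c) (0, c') := by
  induction c', hcc' using Int.leInduction with
  | base => exact Relation.ReflTransGen.refl
  | succ c' hle ih =>
    refine (ih (by omega)).tail ⟨mem_row.mpr ⟨rfl, by omega, by omega⟩,
      mem_row.mpr ⟨rfl, by omega, hc'⟩, Or.inr (Or.inr (Or.inl rfl))⟩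

lemma row_isRibbon {a b : ℤ} (hab : a < b) : IsRibbon (row a b) := by
  refine ⟨⟨(0, a), mem_row.mpr ⟨rfl, le_rfl, hab⟩⟩, ?_, ?_, ?_⟩
  · intro u hu w hw v ⟨_, _⟩ ⟨_, _⟩
    rw [mem_row] at hu hw ⊢
    omega
  · rintro ⟨_, c⟩ hu ⟨_, c'⟩ hv
    obtain ⟨rfl, hu⟩ := mem_row.mp hu
    obtain ⟨rfl, hv⟩ := mem_row.mp hv
    rcases le_total c c' with h | h
    · exact pathIn_row hu.1 h hv.2
    · exact (pathIn_row hv.1 h hu.2).symm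
  · intro u hu v hv huv
    rw [mem_row] at hu hv
    exact Prod.ext (by omega) (by omega)

theorem stmt9_general (e : ℕ) (β : ZMod e → ℤ) :
    IsPosRoot e β ↔ ∃ ξ : Finset Node, IsRibbon ξ ∧ cont e ξ = β := by
  constructor
  · rintro ⟨t, h, hh, rfl⟩
    obtain ⟨a, rfl⟩ := ZMod.intCast_surjective t
    have hrow : IsRibbon (row a (a + h)) := row_isRibbon (by omega)
    refine ⟨row a (a + h), hrow, ?_⟩
    rw [cont_eq_residueCount_image_diag e hrow.2.2.2, image_diag_row, alphaR_intCast]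
  · rintro ⟨ξ, hξ, rfl⟩
    obtain ⟨a, ha⟩ := hξ.image_diag_eq_Ico
    refine ⟨a, #ξ, hξ.1.card_pos, ?_⟩
    rw [cont_eq_residueCount_image_diag e hξ.2.2.2, ha, alphaR_intCast]

theorem stmt9 (e : ℕ) (he : 1 < e) (β : ZMod e → ℤ) (hβ : ∀ i, 0 ≤ β i) :
    IsPosRoot e β ↔ ∃ ξ : Finset Node, IsRibbon ξ ∧ cont e ξ = β :=
  stmt9_general e β
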